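/- Let Y be a symmetric random variable whose moments grow α-regularly (α ≥ 1). Let p, q be positive even integers with p ≥ 2q, and suppose E|1+Y|^q ≤ e^A ≤ e^q for some A > 0. Then E|1 + (q/(4eαp))Y|^p ≤ e^{pA/q}. -/

import Mathlib

open MeasureTheory

/-- `‖Y‖_p = (E|Y|^p)^{1/p}`. -/
noncomputable def mnorm {Ω : Type*} [MeasurableSpace Ω] (μ : Measure Ω) (Y : Ω → ℝ)
    (p : ℝ) : ℝ :=
  (∫ ω, |Y ω| ^ p ∂μ) ^ (1 / p)

/-!
Expand `E(1 + cY)^p`, `c = q/(4eαp)`, binomially. By symmetry the odd moments vanish, so all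
terms are nonnegative. For `k ≤ q` the estimate `C(p,k) c^k ≤ (epc/k)^k ≤ (q/k)^k ≤ C(q,k)`
dominates the head of the sum by `E(1 + Y)^q ≤ e^A`. For `k > q`, regular growth gives
`E Y^k ≤ (αk/q · ‖Y‖_q)^k` and the same binomial estimate makes the `k`-th term at most
`(‖Y‖_q/4)^k`. Since `1 + ‖Y‖_q^q ≤ E|1 + Y|^q ≤ e^A ≤ e^q`, we have `‖Y‖_q < e < 3`, so this
geometric tail is at most `‖Y‖_q^q ≤ e^A - 1`. The total is at most
`2e^A - 1 ≤ e^{2A} ≤ e^{pA/q}`.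
-/

open Finset ProbabilityTheory Real
open scoped Nat

namespace Nat

lemma pow_mul_factorial_le_descFactorial_mul_pow {n k : ℕ} (hk : k ≤ n) :
    n ^ k * k ! ≤ n.descFactorial k * k ^ k := by
  calc n ^ k * k ! = ∏ i ∈ range k, n * (k - i) := by
        rw [← descFactorial_self, descFactorial_eq_prod_range, prod_mul_distrib, prod_const,
          card_range]
    _ ≤ ∏ i ∈ range k, (n - i) * k := prod_le_prod' fun i hi => by
        have hik : i < k := mem_range.mp hi
        rw [Nat.mul_sub, Nat.sub_mul]
        exact Nat.sub_le_sub_left (by nlinarith) _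
    _ = n.descFactorial k * k ^ k := by
        rw [descFactorial_eq_prod_range, prod_mul_distrib, prod_const, card_range]

lemma div_pow_le_choose {n k : ℕ} (hk : k ≤ n) : ((n : ℝ) / k) ^ k ≤ n.choose k := by
  rcases k.eq_zero_or_pos with rfl | hk0
  · simp
  have hnat := pow_mul_factorial_le_descFactorial_mul_pow hk
  rw [descFactorial_eq_factorial_mul_choose] at hnat
  have hmul : (n : ℝ) ^ k * (k ! : ℕ) ≤ ((k ! : ℕ) * n.choose k) * (k : ℝ) ^ k := by
    exact_mod_cast hnat
  rw [div_pow, div_le_iff₀ (by positivity)]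
  have hfac : (0 : ℝ) < (k ! : ℕ) := mod_cast k.factorial_pos
  nlinarith

lemma choose_le_exp_mul_div_pow (n k : ℕ) : (n.choose k : ℝ) ≤ (exp 1 * n / k) ^ k := by
  rcases k.eq_zero_or_pos with rfl | hk0
  · simp
  have hfac : ((k : ℝ) / exp 1) ^ k ≤ k ! := by
    have := Real.pow_div_factorial_le_exp _ (Nat.cast_nonneg k) k
    rw [← exp_one_pow, div_le_iff₀ (by positivity)] at this
    rwa [div_pow, div_le_iff₀ (by positivity), mul_comm]
  calc (n.choose k : ℝ) ≤ (n : ℝ) ^ k / k ! := choose_le_pow_div k n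
    _ ≤ (n : ℝ) ^ k / ((k : ℝ) / exp 1) ^ k := by gcongr
    _ = (exp 1 * n / k) ^ k := by rw [← div_pow]; congr 1; field_simp

lemma choose_mul_pow_le_choose {n m k : ℕ} {c : ℝ} (hc : 0 ≤ c) (hcn : exp 1 * n * c ≤ m)
    (hk : k ≤ m) : n.choose k * c ^ k ≤ m.choose k :=
  calc n.choose k * c ^ k ≤ (exp 1 * n / k) ^ k * c ^ k := by
        gcongr; exact choose_le_exp_mul_div_pow n k
    _ = (exp 1 * n * c / k) ^ k := by rw [← mul_pow, div_mul_eq_mul_div]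
    _ ≤ ((m : ℝ) / k) ^ k := by gcongr
    _ ≤ m.choose k := div_pow_le_choose hk

end Nat

lemma sum_Ico_div_four_pow_le {σ : ℝ} (hσ0 : 0 ≤ σ) (hσ3 : σ ≤ 3) {q : ℕ} (hq : 0 < q) (n : ℕ) :
    ∑ k ∈ Ico (q + 1) n, (σ / 4) ^ k ≤ σ ^ q :=
  calc ∑ k ∈ Ico (q + 1) n, (σ / 4) ^ k ≤ (σ / 4) ^ (q + 1) / (1 - σ / 4) :=
        geom_sum_Ico_le_of_lt_one (by positivity) (by linarith)
    _ = σ ^ q / 4 ^ q * (σ / (4 - σ)) := by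
        rw [pow_succ, div_pow]; field_simp
    _ ≤ σ ^ q / 4 * 3 := by
        have h4q : (4 : ℝ) ≤ 4 ^ q := le_self_pow₀ (by norm_num) hq.ne'
        have hσ' : σ / (4 - σ) ≤ 3 := by rw [div_le_iff₀ (by linarith)]; linarith
        gcongr
        exact div_nonneg hσ0 (by linarith)
    _ ≤ σ ^ q := by nlinarith [pow_nonneg hσ0 q]

lemma MeasureTheory.MemLp.integrable_pow {Ω : Type*} [MeasurableSpace Ω] {μ : Measure Ω}
    [IsFiniteMeasure μ] {Y : Ω → ℝ} {n : ℕ} (hY : MemLp Y n μ) :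
    Integrable (fun ω => Y ω ^ n) μ :=
  hY.integrable_norm_pow'.congr' (hY.aestronglyMeasurable.pow n)
    (.of_forall fun ω => by simp [norm_pow])

section Moments

variable {Ω : Type*} [MeasurableSpace Ω] {μ : Measure Ω} {Y : Ω → ℝ}

lemma moment_eq_integral_pow (n : ℕ) : moment Y n μ = ∫ ω, Y ω ^ n ∂μ := rfl

lemma mnorm_nonneg (p : ℝ) : 0 ≤ mnorm μ Y p :=
  rpow_nonneg (integral_nonneg fun ω => by positivity) _

lemma mnorm_natCast_pow {n : ℕ} (hn : n ≠ 0) : mnorm μ Y n ^ n = ∫ ω, |Y ω| ^ n ∂μ := by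
  simp only [mnorm, Real.rpow_natCast, one_div]
  exact Real.rpow_inv_natCast_pow (integral_nonneg fun ω => by positivity) hn

lemma moment_le_mnorm_pow (n : ℕ) (hn : n ≠ 0) : moment Y n μ ≤ mnorm μ Y n ^ n := by
  rw [mnorm_natCast_pow hn, moment_eq_integral_pow]
  refine (le_abs_self _).trans (abs_integral_le_integral_abs.trans_eq ?_)
  simp [abs_pow]

lemma moment_eq_zero_of_odd (hY : AEMeasurable Y μ)
    (hsymm : μ.map Y = μ.map (fun ω => -Y ω)) {n : ℕ} (hn : Odd n) : moment Y n μ = 0 := by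
  have hmap : moment Y n μ = ∫ ω, (-Y ω) ^ n ∂μ := by
    rw [moment_eq_integral_pow, ← integral_map (f := fun x : ℝ => x ^ n) hY (by fun_prop),
      hsymm]
    exact integral_map hY.neg (by fun_prop)
  rw [moment_eq_integral_pow] at hmap ⊢
  simp only [hn.neg_pow, integral_neg] at hmap
  linarith

lemma moment_nonneg_of_map_neg (hY : AEMeasurable Y μ)
    (hsymm : μ.map Y = μ.map (fun ω => -Y ω)) (n : ℕ) : 0 ≤ moment Y n μ := by
  rcases n.even_or_odd with hn | hn
  · exact integral_nonneg fun ω => by simpa using hn.pow_nonneg (Y ω)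
  · exact (moment_eq_zero_of_odd hY hsymm hn).ge

lemma integral_one_add_mul_pow {n : ℕ} (hint : ∀ k ≤ n, Integrable (fun ω => Y ω ^ k) μ)
    (c : ℝ) : ∫ ω, (1 + c * Y ω) ^ n ∂μ
      = ∑ k ∈ range (n + 1), (n.choose k : ℝ) * c ^ k * moment Y k μ := by
  simp_rw [add_comm (1 : ℝ), add_pow, one_pow, mul_one]
  rw [integral_finsetSum _ fun k hk => ((hint k (mem_range_succ_iff.mp hk)).const_mul
    (c ^ k * n.choose k)).congr (.of_forall fun ω => by simp only [mul_pow]; ring)]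
  refine sum_congr rfl fun k _ => ?_
  rw [moment_eq_integral_pow, ← integral_const_mul]
  congr 1; ext ω; ring

lemma one_add_integral_abs_pow_le [IsProbabilityMeasure μ] (hY : AEMeasurable Y μ)
    (hsymm : μ.map Y = μ.map (fun ω => -Y ω)) {q : ℕ}
    (hint : ∀ k ≤ q, Integrable (fun ω => Y ω ^ k) μ) (hq : Even q) (hq0 : q ≠ 0) :
    1 + ∫ ω, |Y ω| ^ q ∂μ ≤ ∫ ω, (1 + Y ω) ^ q ∂μ :=
  calc 1 + ∫ ω, |Y ω| ^ q ∂μ = ∑ k ∈ {0, q}, (q.choose k : ℝ) * 1 ^ k * moment Y k μ := by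
        simp [sum_pair hq0.symm, moment_eq_integral_pow, hq.pow_abs]
    _ ≤ ∑ k ∈ range (q + 1), (q.choose k : ℝ) * 1 ^ k * moment Y k μ := by
        refine sum_le_sum_of_subset_of_nonneg ?_ fun k _ _ => ?_
        · simp [insert_subset_iff]
        · rw [one_pow, mul_one]
          exact mul_nonneg (Nat.cast_nonneg _) (moment_nonneg_of_map_neg hY hsymm k)
    _ = ∫ ω, (1 + Y ω) ^ q ∂μ := by simpa using (integral_one_add_mul_pow hint 1).symm

lemma sum_range_choose_mul_pow_mul_moment_le (hY : AEMeasurable Y μ)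
    (hsymm : μ.map Y = μ.map (fun ω => -Y ω)) {p q : ℕ}
    (hint : ∀ k ≤ q, Integrable (fun ω => Y ω ^ k) μ) {c : ℝ} (hc : 0 ≤ c)
    (hcp : exp 1 * p * c ≤ q) :
    ∑ k ∈ range (q + 1), (p.choose k : ℝ) * c ^ k * moment Y k μ
      ≤ ∫ ω, (1 + Y ω) ^ q ∂μ :=
  calc ∑ k ∈ range (q + 1), (p.choose k : ℝ) * c ^ k * moment Y k μ
      ≤ ∑ k ∈ range (q + 1), (q.choose k : ℝ) * 1 ^ k * moment Y k μ :=
        sum_le_sum fun k hk => by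
          rw [one_pow, mul_one]
          exact mul_le_mul_of_nonneg_right
            (Nat.choose_mul_pow_le_choose hc hcp (mem_range_succ_iff.mp hk))
            (moment_nonneg_of_map_neg hY hsymm k)
    _ = ∫ ω, (1 + Y ω) ^ q ∂μ := by simpa using (integral_one_add_mul_pow hint 1).symm

lemma sum_Ico_choose_mul_pow_mul_moment_le {α : ℝ} (hα : 0 < α)
    (hreg : ∀ r s : ℝ, 2 ≤ s → s ≤ r → mnorm μ Y r ≤ α * (r / s) * mnorm μ Y s)
    {p q : ℕ} (hp : p ≠ 0) (hq : 2 ≤ q) (hσ : mnorm μ Y q ≤ 3) :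
    ∑ k ∈ Ico (q + 1) (p + 1), (p.choose k : ℝ) * ((q : ℝ) / (4 * exp 1 * α * p)) ^ k
      * moment Y k μ ≤ mnorm μ Y q ^ q := by
  set σ := mnorm μ Y q
  have hσ0 : 0 ≤ σ := mnorm_nonneg _
  refine (sum_le_sum fun k hk => ?_).trans (sum_Ico_div_four_pow_le hσ0 hσ (by omega) (p + 1))
  have hqk : q < k := by simp only [mem_Ico] at hk; omega
  have hmoment : moment Y k μ ≤ (α * (k / q) * σ) ^ k :=
    (moment_le_mnorm_pow k (by omega)).trans <| pow_le_pow_left₀ (mnorm_nonneg _)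
      (hreg k q (mod_cast hq) (mod_cast hqk.le)) k
  have hq0 : (q : ℝ) ≠ 0 := mod_cast (show q ≠ 0 by omega)
  have hk0 : (k : ℝ) ≠ 0 := mod_cast (show k ≠ 0 by omega)
  calc (p.choose k : ℝ) * ((q : ℝ) / (4 * exp 1 * α * p)) ^ k * moment Y k μ
      ≤ (p.choose k : ℝ) * ((q : ℝ) / (4 * exp 1 * α * p)) ^ k * (α * (k / q) * σ) ^ k := by
        gcongr
    _ ≤ (exp 1 * p / k) ^ k * ((q : ℝ) / (4 * exp 1 * α * p)) ^ k * (α * (k / q) * σ) ^ k := by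
        gcongr
        exact Nat.choose_le_exp_mul_div_pow p k
    _ = (σ / 4) ^ k := by
        rw [← mul_pow, ← mul_pow]
        congr 1
        field_simp

end Moments

/-- For a symmetric `Y` with α-regularly growing moments, even integers `p ≥ 2q > 0` and
`A > 0` with `E|1+Y|^q ≤ e^A ≤ e^q`, one has `E|1 + (q/(4eαp)) Y|^p ≤ e^{pA/q}`. -/
theorem stmt7 {Ω : Type*} [MeasurableSpace Ω] (μ : Measure Ω) [IsProbabilityMeasure μ]
    (Y : Ω → ℝ) (hmeas : Measurable Y) (α : ℝ) (hα : 1 ≤ α)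
    (hsymm : Measure.map Y μ = Measure.map (fun ω => -Y ω) μ)
    (hmem : ∀ r : ℝ, 2 ≤ r → MemLp Y (ENNReal.ofReal r) μ)
    (hreg : ∀ r s : ℝ, 2 ≤ s → s ≤ r → mnorm μ Y r ≤ α * (r / s) * mnorm μ Y s)
    (p q : ℕ) (hqpos : 0 < q) (hqeven : Even q) (hpeven : Even p) (hpq : 2 * q ≤ p)
    (A : ℝ) (hA : 0 < A)
    (h1 : ∫ ω, |1 + Y ω| ^ q ∂μ ≤ Real.exp A) (h2 : Real.exp A ≤ Real.exp q) :
    ∫ ω, |1 + (q : ℝ) / (4 * Real.exp 1 * α * p) * Y ω| ^ p ∂μ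
      ≤ Real.exp ((p : ℝ) * A / q) := by
  have hq2 : 2 ≤ q := by obtain ⟨r, rfl⟩ := hqeven; omega
  have hint : ∀ k : ℕ, Integrable (fun ω => Y ω ^ k) μ := fun k =>
    ((hmem _ (le_max_left 2 (k : ℝ))).mono_exponent (by simp)).integrable_pow
  have h1' : ∫ ω, (1 + Y ω) ^ q ∂μ ≤ exp A := by simpa only [hqeven.pow_abs] using h1
  have hσA : mnorm μ Y q ^ q ≤ exp A - 1 := by
    have := one_add_integral_abs_pow_le hmeas.aemeasurable hsymm (fun k _ => hint k) hqeven
      hqpos.ne'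
    rw [← mnorm_natCast_pow hqpos.ne'] at this
    linarith
  have hσ3 : mnorm μ Y q ≤ 3 := by
    have : mnorm μ Y q ^ q < exp 1 ^ q := by rw [exp_one_pow]; linarith
    linarith [lt_of_pow_lt_pow_left₀ q (exp_pos 1).le this, exp_one_lt_d9]
  have hcp : exp 1 * p * (q / (4 * exp 1 * α * p)) ≤ q := by
    have hp0 : (p : ℝ) ≠ 0 := mod_cast (show p ≠ 0 by omega)
    rw [show exp 1 * p * (q / (4 * exp 1 * α * p)) = q / (4 * α) by field_simp]
    exact div_le_self (Nat.cast_nonneg q) (by linarith)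
  have hhead := sum_range_choose_mul_pow_mul_moment_le hmeas.aemeasurable hsymm
    (fun k _ => hint k) (by positivity) hcp
  have htail := sum_Ico_choose_mul_pow_mul_moment_le (p := p) (by linarith) hreg (by omega) hq2 hσ3
  calc ∫ ω, |1 + (q : ℝ) / (4 * exp 1 * α * p) * Y ω| ^ p ∂μ
      = ∑ k ∈ range (p + 1), (p.choose k : ℝ) * ((q : ℝ) / (4 * exp 1 * α * p)) ^ k
          * moment Y k μ := by
        simp only [hpeven.pow_abs]; exact integral_one_add_mul_pow (fun k _ => hint k) _
    _ = _ := (sum_range_add_sum_Ico _ (by omega : q + 1 ≤ p + 1)).symm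
    _ ≤ exp A + (exp A - 1) := add_le_add (hhead.trans h1') (htail.trans hσA)
    _ ≤ exp (2 * A) := by rw [two_mul, exp_add]; nlinarith [sq_nonneg (exp A - 1)]
    _ ≤ exp (p * A / q) := by
        gcongr
        rw [le_div_iff₀ (by positivity)]
        have hpq' : (2 * q : ℝ) ≤ p := mod_cast hpq
        nlinarith
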